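/- arXiv:2212.07180 — 4 statements merged into one kernel-verified Lean document; each statement's English description precedes it below -/
import Mathlib

section
/- There exists a constant C > 0 such that for any (α₁,α₂) ∈ R'₁ with α₁ ≥ α₂, letting (x,y) be the canonical representation of (α₁,α₂) and setting α₃ := 1−x², for every n ∈ ℕ, setting a = ⌊xn⌋, b = ⌊yn⌋ and c = n−a−b, the n-vertex 3-colouring template F(a,b,c) satisfies |E(F_i)| ≥ α_i·C(n,2) − C·n for each i ∈ {1,2,3} and contains no rainbow triangle. -/
/-- The number of edges of a simple graph (as a cardinal via `Set.ncard`). -/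
noncomputable def edgeCount {V : Type*} (G : SimpleGraph V) : ℕ := G.edgeSet.ncard

/-- A 3-colouring template `G` contains a rainbow triangle if there are three distinct
vertices and a permutation of the colours assigning the three edges of the triangle
to distinct colour classes. -/
def HasRainbowTriangle {V : Type*} (G : Fin 3 → SimpleGraph V) : Prop :=
  ∃ u v w : V, u ≠ v ∧ v ≠ w ∧ u ≠ w ∧
    ∃ σ : Equiv.Perm (Fin 3),
      (G (σ 0)).Adj u v ∧ (G (σ 1)).Adj v w ∧ (G (σ 2)).Adj u w

noncomputable def tau : ℝ := (4 - Real.sqrt 7) / 9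

/-- `(x, y)` is the canonical representation of `(α₁, α₂) ∈ R₁`. -/
def IsCanonRepR1 (α₁ α₂ x y : ℝ) : Prop :=
  0 ≤ x ∧ 0 ≤ y ∧ 1/2 ≤ x ∧ x + y ≤ 1 ∧ α₁ = x^2 + y^2 ∧ α₂ = x^2 + (1-x-y)^2

/-- Membership in the region `R₁`. -/
noncomputable def MemR1 (α₁ α₂ : ℝ) : Prop :=
  α₁ ∈ Set.Icc (0:ℝ) 1 ∧ α₂ ∈ Set.Icc (0:ℝ) 1 ∧
  max (max (1 - α₂) ((1 + tau^2)/2)) α₂ ≤ α₁ ∧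
  α₁ ≤ 1 - 2 * Real.sqrt α₂ + 2 * α₂

/-- Membership in the region `R'₁`. -/
noncomputable def MemR1' (α₁ α₂ : ℝ) : Prop :=
  MemR1 α₁ α₂ ∧ ∀ x y : ℝ, IsCanonRepR1 α₁ α₂ x y → 1 ≤ 2*x^2 + (1-x-y)^2

/-- The part (0 for `A`, 1 for `B`, 2 for `C`) of a vertex of `Fin n` under the partition
of `[n]` into an initial segment `A` of size `a`, then `B` of size `b`, then `C`. -/
def part (a b : ℕ) {n : ℕ} (v : Fin n) : ℕ :=
  if (v : ℕ) < a then 0 else if (v : ℕ) < a + b then 1 else 2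

/-- The colouring template `F(a, b, c)` (with `c = n - a - b`) on vertex set `Fin n`:
`F₁ = A⁽²⁾ ∪ B⁽²⁾`, `F₂ = A⁽²⁾ ∪ C⁽²⁾`, `F₃ = [n]⁽²⁾ \ A⁽²⁾`. -/
def Ftemplate (n a b : ℕ) : Fin 3 → SimpleGraph (Fin n) :=
  ![SimpleGraph.fromRel (fun u v =>
      (part a b u = 0 ∧ part a b v = 0) ∨ (part a b u = 1 ∧ part a b v = 1)),
    SimpleGraph.fromRel (fun u v =>
      (part a b u = 0 ∧ part a b v = 0) ∨ (part a b u = 2 ∧ part a b v = 2)),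
    SimpleGraph.fromRel (fun u v => ¬(part a b u = 0 ∧ part a b v = 0))]

/-! ### Auxiliary lemmas -/

lemma part_eq_zero {n a b : ℕ} (v : Fin n) : part a b v = 0 ↔ (v:ℕ) < a := by
  unfold part; split_ifs <;> simp <;> omega

lemma part_eq_one {n a b : ℕ} (v : Fin n) : part a b v = 1 ↔ a ≤ (v:ℕ) ∧ (v:ℕ) < a + b := by
  unfold part; split_ifs <;> simp <;> omega

lemma part_eq_two {n a b : ℕ} (v : Fin n) : part a b v = 2 ↔ a + b ≤ (v:ℕ) := by
  unfold part; split_ifs <;> simp <;> omega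

lemma card_filter_val (n : ℕ) (p : ℕ → Prop) [DecidablePred p] :
    ((Finset.univ : Finset (Fin n)).filter fun v : Fin n => p (v:ℕ)).card
      = ((Finset.range n).filter p).card := by
  refine Finset.card_nbij (s := (Finset.univ : Finset (Fin n)).filter fun v : Fin n => p (v:ℕ))
    (t := (Finset.range n).filter p) (fun v => (v:ℕ)) ?_ ?_ ?_
  · intro v hv; simp at hv ⊢; exact hv
  · intro v _ w _ h; exact Fin.val_injective h
  · intro k hk; simp at hk ⊢; exact ⟨⟨k, hk.1⟩, hk.2, rfl⟩

lemma two_mul_count_fromRel_union {n : ℕ} (p q : Fin n → Prop) [DecidablePred p] [DecidablePred q]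
    (hdisj : ∀ v, ¬(p v ∧ q v)) :
    2 * edgeCount (SimpleGraph.fromRel fun u v => (p u ∧ p v) ∨ (q u ∧ q v))
      = ((Finset.univ.filter p).card * (Finset.univ.filter p).card - (Finset.univ.filter p).card)
        + ((Finset.univ.filter q).card * (Finset.univ.filter q).card - (Finset.univ.filter q).card) := by
  set G := SimpleGraph.fromRel fun u v : Fin n => (p u ∧ p v) ∨ (q u ∧ q v) with hG
  haveI : DecidableRel G.Adj := fun s t =>
    Classical.dec _
  have h1 : edgeCount G = G.edgeFinset.card := by
    rw [edgeCount, ← Set.ncard_coe_finset, SimpleGraph.coe_edgeFinset]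
  rw [h1, SimpleGraph.two_mul_card_edgeFinset]
  have h2 : (Finset.univ.filter fun (x : Fin n × Fin n) => G.Adj x.1 x.2)
      = (Finset.univ.filter p).offDiag ∪ (Finset.univ.filter q).offDiag := by
    ext ⟨u, v⟩
    simp only [Finset.mem_filter, Finset.mem_univ, true_and, Finset.mem_union,
      Finset.mem_offDiag, hG, SimpleGraph.fromRel_adj]
    tauto
  rw [h2, Finset.card_union_of_disjoint, Finset.offDiag_card, Finset.offDiag_card]
  rw [Finset.disjoint_left]
  rintro ⟨u, v⟩ hu hv
  simp only [Finset.mem_offDiag, Finset.mem_filter, Finset.mem_univ, true_and] at hu hv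
  exact hdisj u ⟨hu.1, hv.1⟩

lemma two_mul_count_fromRel_compl {n : ℕ} (p : Fin n → Prop) [DecidablePred p] :
    2 * edgeCount (SimpleGraph.fromRel fun u v => ¬(p u ∧ p v))
      = (n * n - n)
        - ((Finset.univ.filter p).card * (Finset.univ.filter p).card - (Finset.univ.filter p).card) := by
  set G := SimpleGraph.fromRel fun u v : Fin n => ¬(p u ∧ p v) with hG
  haveI : DecidableRel G.Adj := fun s t =>
    Classical.dec _
  have h1 : edgeCount G = G.edgeFinset.card := by
    rw [edgeCount, ← Set.ncard_coe_finset, SimpleGraph.coe_edgeFinset]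
  rw [h1, SimpleGraph.two_mul_card_edgeFinset]
  have h2 : (Finset.univ.filter fun (x : Fin n × Fin n) => G.Adj x.1 x.2)
      = (Finset.univ : Finset (Fin n)).offDiag \ (Finset.univ.filter p).offDiag := by
    ext ⟨u, v⟩
    simp only [Finset.mem_filter, Finset.mem_univ, true_and, Finset.mem_sdiff,
      Finset.mem_offDiag, hG, SimpleGraph.fromRel_adj]
    tauto
  rw [h2, Finset.card_sdiff_of_subset, Finset.offDiag_card, Finset.offDiag_card, Finset.card_univ,
    Fintype.card_fin]
  intro x hx
  simp only [Finset.mem_offDiag, Finset.mem_filter, Finset.mem_univ, true_and] at hx ⊢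
  exact hx.2.2

lemma cardP0 {n a b : ℕ} : (Finset.univ.filter fun v : Fin n => part a b v = 0).card = min a n := by
  rw [Finset.filter_congr (fun v _ => by rw [part_eq_zero (a := a) (b := b) v]),
    card_filter_val n (fun k => k < a)]
  have : (Finset.range n).filter (fun k => k < a) = Finset.range (min a n) := by
    ext k; simp; omega
  rw [this, Finset.card_range]

lemma cardP1 {n a b : ℕ} (hab : a + b ≤ n) :
    (Finset.univ.filter fun v : Fin n => part a b v = 1).card = b := by
  rw [Finset.filter_congr (fun v _ => by rw [part_eq_one (a := a) (b := b) v]),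
    card_filter_val n (fun k => a ≤ k ∧ k < a + b)]
  have : (Finset.range n).filter (fun k => a ≤ k ∧ k < a + b) = Finset.Ico a (a+b) := by
    ext k; simp; omega
  rw [this, Nat.card_Ico]; omega

lemma cardP2 {n a b : ℕ} :
    (Finset.univ.filter fun v : Fin n => part a b v = 2).card = n - (a + b) := by
  rw [Finset.filter_congr (fun v _ => by rw [part_eq_two (a := a) (b := b) v]),
    card_filter_val n (fun k => a + b ≤ k)]
  have : (Finset.range n).filter (fun k => a + b ≤ k) = Finset.Ico (a+b) n := by
    ext k; simp; omega
  rw [this, Nat.card_Ico]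

lemma count0 {n a b : ℕ} (hab : a + b ≤ n) :
    2 * edgeCount (Ftemplate n a b 0) = (a*a - a) + (b*b - b) := by
  have h := two_mul_count_fromRel_union (fun v : Fin n => part a b v = 0)
    (fun v : Fin n => part a b v = 1) (fun v => by omega)
  rw [cardP0, cardP1 hab, Nat.min_eq_left (by omega)] at h
  exact h

lemma count1 {n a b : ℕ} (hab : a + b ≤ n) :
    2 * edgeCount (Ftemplate n a b 1)
      = (a*a - a) + ((n - (a+b))*(n - (a+b)) - (n - (a+b))) := by
  have h := two_mul_count_fromRel_union (fun v : Fin n => part a b v = 0)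
    (fun v : Fin n => part a b v = 2) (fun v => by omega)
  rw [cardP0, cardP2, Nat.min_eq_left (by omega)] at h
  exact h

lemma count2 {n a b : ℕ} (hab : a + b ≤ n) :
    2 * edgeCount (Ftemplate n a b 2) = (n*n - n) - (a*a - a) := by
  have h := two_mul_count_fromRel_compl (fun v : Fin n => part a b v = 0)
  rw [cardP0, Nat.min_eq_left (by omega)] at h
  exact h

lemma key_lower (t nr m : ℝ) (ht0 : 0 ≤ t) (hn : 1 ≤ nr) (hm0 : 0 ≤ m)
    (h1 : t*nr - 1 ≤ m) (h2 : m ≤ t*nr + 2) : t^2*nr*(nr-1) - 3*nr ≤ m*(m-1) := by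
  have hnr0 : (0:ℝ) ≤ nr := by linarith
  have htn0 : (0:ℝ) ≤ t*nr := mul_nonneg ht0 hnr0
  rcases le_or_gt (t*nr) m with h | h
  · nlinarith [mul_le_mul h h htn0 hm0, mul_nonneg (sq_nonneg (t - 1/2)) hnr0]
  · rcases le_or_gt 1 (t*nr) with h' | h'
    · nlinarith [mul_le_mul h1 h1 (by linarith : (0:ℝ) ≤ t*nr - 1) hm0,
        mul_nonneg (sq_nonneg (t - 3/2)) hnr0]
    · nlinarith [sq_nonneg (m - 1/2), mul_le_mul h'.le h'.le htn0 zero_le_one,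
        mul_nonneg (mul_nonneg ht0 ht0) hnr0]

lemma key_upper (t nr m : ℝ) (ht0 : 0 ≤ t) (ht1 : t ≤ 1) (hn : 1 ≤ nr) (hm0 : 0 ≤ m)
    (h2 : m ≤ t*nr) : m*(m-1) ≤ t^2*nr*(nr-1) + 3*nr := by
  have hnr0 : (0:ℝ) ≤ nr := by linarith
  have htn0 : (0:ℝ) ≤ t*nr := mul_nonneg ht0 hnr0
  rcases le_or_gt m 1 with h | h
  · nlinarith [mul_nonneg hm0 (by linarith : (0:ℝ) ≤ 1 - m),
      mul_nonneg (mul_nonneg (mul_nonneg ht0 ht0) hnr0) (by linarith : (0:ℝ) ≤ nr - 1)]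
  · nlinarith [mul_le_mul h2 h2 hm0 htn0,
      mul_nonneg (mul_nonneg ht0 (by linarith : (0:ℝ) ≤ 1 - t)) hnr0]

lemma no_rainbow (n a b : ℕ) : ¬ HasRainbowTriangle (Ftemplate n a b) := by
  rintro ⟨u, v, w, huv, hvw, huw, σ, h0, h1, h2⟩
  have hQ : ∀ i : Fin 3, ∀ s t : Fin n, (Ftemplate n a b i).Adj s t →
      ((i:ℕ) = 0 → part a b s = part a b t ∧ part a b s ≤ 1) ∧
      ((i:ℕ) = 1 → part a b s = part a b t ∧ part a b s ≠ 1) ∧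
      ((i:ℕ) = 2 → ¬(part a b s = 0 ∧ part a b t = 0)) := by
    intro i s t h
    fin_cases i <;>
      simp only [Ftemplate, Matrix.cons_val_zero, Matrix.cons_val_one, Matrix.head_cons,
        Matrix.cons_val_two, Matrix.tail_cons, SimpleGraph.fromRel_adj] at h <;>
      obtain ⟨-, h⟩ := h <;> norm_num <;> omega
  have q0 := hQ _ _ _ h0
  have q1 := hQ _ _ _ h1
  have q2 := hQ _ _ _ h2
  have d01 : ((σ 0 : Fin 3) : ℕ) ≠ ((σ 1 : Fin 3) : ℕ) :=
    fun hh => σ.injective.ne (by decide : (0 : Fin 3) ≠ 1) (Fin.val_injective hh)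
  have d02 : ((σ 0 : Fin 3) : ℕ) ≠ ((σ 2 : Fin 3) : ℕ) :=
    fun hh => σ.injective.ne (by decide : (0 : Fin 3) ≠ 2) (Fin.val_injective hh)
  have d12 : ((σ 1 : Fin 3) : ℕ) ≠ ((σ 2 : Fin 3) : ℕ) :=
    fun hh => σ.injective.ne (by decide : (1 : Fin 3) ≠ 2) (Fin.val_injective hh)
  have l0 := (σ 0).isLt
  have l1 := (σ 1).isLt
  have l2 := (σ 2).isLt
  omega

lemma nat_le_sq (a : ℕ) : a ≤ a * a := by nlinarith

theorem F_template_is_extremal_in_R1' :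
    ∃ C : ℝ, C > 0 ∧ ∀ α₁ α₂ x y : ℝ, MemR1' α₁ α₂ → α₁ ≥ α₂ →
      IsCanonRepR1 α₁ α₂ x y → ∀ n : ℕ,
        (∀ i : Fin 3,
          (edgeCount (Ftemplate n ⌊x * (n:ℝ)⌋₊ ⌊y * (n:ℝ)⌋₊ i) : ℝ) ≥
            ![α₁, α₂, 1 - x^2] i * (n.choose 2 : ℝ) - C * n) ∧
        ¬ HasRainbowTriangle (Ftemplate n ⌊x * (n:ℝ)⌋₊ ⌊y * (n:ℝ)⌋₊) := by
  refine ⟨5, by norm_num, ?_⟩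
  intro α₁ α₂ x y _ _ hcanon n
  refine ⟨?_, no_rainbow _ _ _⟩
  obtain ⟨hx0, hy0, hx2, hxy, hα₁, hα₂⟩ := hcanon
  have hx1 : x ≤ 1 := by linarith
  have hy1 : y ≤ 1 := by linarith
  set a := ⌊x * (n:ℝ)⌋₊ with ha
  set b := ⌊y * (n:ℝ)⌋₊ with hb
  intro i
  rcases Nat.eq_zero_or_pos n with hn | hn
  · subst hn
    have hz : ![α₁, α₂, 1 - x^2] i * (((0:ℕ).choose 2 : ℕ) : ℝ) - 5 * ((0:ℕ):ℝ) = 0 := by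
      norm_num [Nat.choose]
    refine ge_trans ?_ (le_of_eq hz)
    positivity
  -- n ≥ 1
  have hn1 : (1:ℝ) ≤ n := by exact_mod_cast hn
  have hxn0 : (0:ℝ) ≤ x * n := by positivity
  have hyn0 : (0:ℝ) ≤ y * n := by positivity
  have haub : (a:ℝ) ≤ x * n := Nat.floor_le hxn0
  have halb : x * n - 1 ≤ (a:ℝ) := by
    have := Nat.lt_floor_add_one (x * (n:ℝ)); linarith
  have hbub : (b:ℝ) ≤ y * n := Nat.floor_le hyn0
  have hblb : y * n - 1 ≤ (b:ℝ) := by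
    have := Nat.lt_floor_add_one (y * (n:ℝ)); linarith
  have hab : a + b ≤ n := by
    have : ((a + b : ℕ) : ℝ) ≤ (n:ℝ) := by push_cast; nlinarith
    exact_mod_cast this
  set c := n - (a + b) with hc
  have hcr : (c:ℝ) = (n:ℝ) - a - b := by
    rw [hc]; push_cast [Nat.cast_sub hab]; ring
  have ha0 : (0:ℝ) ≤ (a:ℝ) := Nat.cast_nonneg a
  have hb0 : (0:ℝ) ≤ (b:ℝ) := Nat.cast_nonneg b
  have hc0 : (0:ℝ) ≤ (c:ℝ) := Nat.cast_nonneg c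
  have hchoose : ((n.choose 2 : ℕ) : ℝ) = (n:ℝ) * ((n:ℝ) - 1) / 2 := Nat.cast_choose_two (K := ℝ) n
  fin_cases i
  · -- F₁
    show (edgeCount (Ftemplate n a b 0) : ℝ) ≥ α₁ * ((n.choose 2 : ℕ) : ℝ) - 5 * n
    have h := count0 (n := n) (a := a) (b := b) hab
    have h2 : 2 * (edgeCount (Ftemplate n a b 0) : ℝ)
        = ((a:ℝ) * a - a) + ((b:ℝ) * b - b) := by
      have := congrArg (fun k : ℕ => (k : ℝ)) h
      push_cast [Nat.cast_sub (nat_le_sq a), Nat.cast_sub (nat_le_sq b)] at this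
      linarith [this]
    have kx := key_lower x n a hx0 hn1 ha0 halb (by linarith)
    have ky := key_lower y n b hy0 hn1 hb0 hblb (by linarith)
    rw [hchoose, hα₁]
    linarith
  · -- F₂
    show (edgeCount (Ftemplate n a b 1) : ℝ) ≥ α₂ * ((n.choose 2 : ℕ) : ℝ) - 5 * n
    have h := count1 (n := n) (a := a) (b := b) hab
    have hcc : c * c - c = (n - (a+b)) * (n - (a+b)) - (n - (a+b)) := by rw [hc]
    have h2 : 2 * (edgeCount (Ftemplate n a b 1) : ℝ)
        = ((a:ℝ) * a - a) + ((c:ℝ) * c - c) := by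
      rw [← hcc] at h
      have := congrArg (fun k : ℕ => (k : ℝ)) h
      push_cast [Nat.cast_sub (nat_le_sq a), Nat.cast_sub (nat_le_sq c)] at this
      linarith [this]
    have kx := key_lower x n a hx0 hn1 ha0 halb (by linarith)
    have hclb : (1 - x - y) * n - 1 ≤ (c:ℝ) := by rw [hcr]; linarith
    have hcub : (c:ℝ) ≤ (1 - x - y) * n + 2 := by rw [hcr]; linarith
    have kz := key_lower (1 - x - y) n c (by linarith) hn1 hc0 hclb hcub
    rw [hchoose, hα₂]
    linarith
  · -- F₃
    show (edgeCount (Ftemplate n a b 2) : ℝ) ≥ (1 - x^2) * ((n.choose 2 : ℕ) : ℝ) - 5 * n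
    have h := count2 (n := n) (a := a) (b := b) hab
    have han : a ≤ n := by omega
    have haan : a * a - a ≤ n * n - n := by
      have h1 : a * a ≤ n * n := Nat.mul_le_mul han han
      have h2 : a * a + n ≤ n * n + a := by nlinarith
      omega
    have h2 : 2 * (edgeCount (Ftemplate n a b 2) : ℝ)
        = ((n:ℝ) * n - n) - ((a:ℝ) * a - a) := by
      have := congrArg (fun k : ℕ => (k : ℝ)) h
      push_cast [Nat.cast_sub (nat_le_sq a), Nat.cast_sub (nat_le_sq n),
        Nat.cast_sub haan] at this
      linarith [this]
    have kx := key_upper x n a hx0 hx1 hn1 ha0 haub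
    rw [hchoose]
    linarith
end

section
/- For all non-negative integers a,b,c with a+b+c = n, the 3-colouring template F(a,b,c) contains no rainbow triangle. -/
/-- The condition on the parts of the two endpoints implied by adjacency in colour `i`. -/
def Qcond : Fin 3 → ℕ → ℕ → Prop :=
  ![fun p q => (p = 0 ∧ q = 0) ∨ (p = 1 ∧ q = 1),
    fun p q => (p = 0 ∧ q = 0) ∨ (p = 2 ∧ q = 2),
    fun p q => ¬(p = 0 ∧ q = 0)]

lemma adj_Qcond (n a b : ℕ) (i : Fin 3) (x y : Fin n)
    (h : (Ftemplate n a b i).Adj x y) : Qcond i (part a b x) (part a b y) := by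
  fin_cases i <;>
    norm_num [Ftemplate, SimpleGraph.fromRel_adj] at h <;>
    norm_num [Qcond] <;>
    tauto

lemma Qcond_triangle (i j k : Fin 3) (hij : i ≠ j) (hik : i ≠ k) (hjk : j ≠ k)
    (x y z : ℕ) (q0 : Qcond i x y) (q1 : Qcond j y z) (q2 : Qcond k x z) : False := by
  fin_cases i <;> fin_cases j <;> fin_cases k <;>
    first
      | exact absurd rfl hij
      | exact absurd rfl hik
      | exact absurd rfl hjk
      | (norm_num [Qcond] at q0 q1 q2; omega)

theorem F_template_no_rainbow_triangle (n a b c : ℕ) (habc : a + b + c = n) :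
    ¬ HasRainbowTriangle (Ftemplate n a b) := by
  rintro ⟨u, v, w, -, -, -, σ, h0, h1, h2⟩
  exact Qcond_triangle (σ 0) (σ 1) (σ 2)
    (fun h => by simpa using σ.injective h)
    (fun h => by simpa using σ.injective h)
    (fun h => by simpa using σ.injective h)
    _ _ _ (adj_Qcond n a b _ _ _ h0) (adj_Qcond n a b _ _ _ h1) (adj_Qcond n a b _ _ _ h2)
end

section
/- If G = (G₁,G₂,G₃) is a 3-colouring template on n ≥ 3 vertices containing no rainbow triangle, then |E(G₁)| + |E(G₂)| + |E(G₃)| ≤ 2·C(n,2). -/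
set_option synthInstance.maxHeartbeats 400000 in
set_option synthInstance.maxSize 1024 in
private lemma aux3 : ∀ A B C : Finset (Fin 3),
    (¬ ∃ i ∈ A, ∃ j ∈ B, ∃ k ∈ C, i ≠ j ∧ j ≠ k ∧ i ≠ k) →
    A.card + B.card + C.card ≤ 6 := by decide

private lemma cardNe {n : ℕ} (a b : Fin n) (hab : a ≠ b) :
    (Finset.univ.filter fun c => a ≠ c ∧ b ≠ c).card = n - 2 := by
  have h : (Finset.univ.filter fun c => a ≠ c ∧ b ≠ c) = Finset.univ \ {a, b} := by
    ext c
    simp only [Finset.mem_filter, Finset.mem_univ, true_and, Finset.mem_sdiff,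
      Finset.mem_insert, Finset.mem_singleton, not_or]
    constructor
    · rintro ⟨h1, h2⟩; exact ⟨h1.symm, h2.symm⟩
    · rintro ⟨h1, h2⟩; exact ⟨Ne.symm h1, Ne.symm h2⟩
  rw [h, Finset.card_sdiff_of_subset (Finset.subset_univ _), Finset.card_univ, Fintype.card_fin,
    Finset.card_pair hab]

private lemma sumIf {n : ℕ} (x : Fin n → Fin n → ℕ) (hx : ∀ a, x a a = 0) :
    (∑ a : Fin n, ∑ b : Fin n, ∑ c : Fin n,
      (if a ≠ b ∧ a ≠ c ∧ b ≠ c then x a b else 0))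
     = (n - 2) * ∑ a : Fin n, ∑ b : Fin n, x a b := by
  rw [Finset.mul_sum]
  refine Finset.sum_congr rfl fun a _ => ?_
  rw [Finset.mul_sum]
  refine Finset.sum_congr rfl fun b _ => ?_
  by_cases hab : a = b
  · subst hab; simp [hx]
  · have h1 : ∀ c : Fin n, (if a ≠ b ∧ a ≠ c ∧ b ≠ c then x a b else 0)
        = if a ≠ c ∧ b ≠ c then x a b else 0 := by
      intro c; simp [hab]
    simp only [h1]
    rw [← Finset.sum_filter, Finset.sum_const, smul_eq_mul, cardNe a b hab, mul_comm]

private lemma cardNe1 {n : ℕ} (a : Fin n) :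
    (Finset.univ.filter fun c : Fin n => a ≠ c).card = n - 1 := by
  have h : (Finset.univ.filter fun c : Fin n => a ≠ c) = Finset.univ \ {a} := by
    ext c
    simp only [Finset.mem_filter, Finset.mem_univ, true_and, Finset.mem_sdiff,
      Finset.mem_singleton]
    exact ne_comm
  rw [h, Finset.card_sdiff_of_subset (Finset.subset_univ _), Finset.card_univ, Fintype.card_fin,
    Finset.card_singleton]

theorem gallai_template_total_edge_bound
    (n : ℕ) (hn : 3 ≤ n) (G : Fin 3 → SimpleGraph (Fin n))
    (hG : ¬ HasRainbowTriangle G) :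
    edgeCount (G 0) + edgeCount (G 1) + edgeCount (G 2) ≤ 2 * n.choose 2 := by
  classical
  set m : Fin n → Fin n → ℕ :=
    fun u v => (Finset.univ.filter fun i : Fin 3 => (G i).Adj u v).card with hm
  have hm0 : ∀ a, m a a = 0 := by
    intro a; simp [hm]
  -- key triangle bound
  have key : ∀ u v w : Fin n, u ≠ v → u ≠ w → v ≠ w →
      m u v + m v w + m u w ≤ 6 := by
    intro u v w huv huw hvw
    refine aux3 _ _ _ ?_
    rintro ⟨i, hi, j, hj, k, hk, hij, hjk, hik⟩
    simp only [Finset.mem_filter, Finset.mem_univ, true_and] at hi hj hk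
    apply hG
    refine ⟨u, v, w, huv, hvw, huw, ?_⟩
    have hinj : Function.Injective ![i, j, k] := by
      intro a b hab
      fin_cases a <;> fin_cases b <;> simp_all
    refine ⟨Equiv.ofBijective _ (Finite.injective_iff_bijective.mp hinj), ?_, ?_, ?_⟩ <;>
      simp [Equiv.ofBijective_apply] <;> assumption
  -- M = twice total edges
  set E := edgeCount (G 0) + edgeCount (G 1) + edgeCount (G 2) with hE
  set M := ∑ u : Fin n, ∑ v : Fin n, m u v with hM
  have h1 : ∀ i : Fin 3,
      (∑ u : Fin n, ∑ v : Fin n, if (G i).Adj u v then 1 else 0) = 2 * edgeCount (G i) := by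
    intro i
    have h1' : edgeCount (G i) = (G i).edgeFinset.card := by
      simp [edgeCount, SimpleGraph.edgeFinset, Set.ncard_eq_toFinset_card']
    rw [h1', SimpleGraph.two_mul_card_edgeFinset, Finset.card_filter, Fintype.sum_prod_type]
  have hM2 : M = 2 * E := by
    have h2 : M = ∑ i : Fin 3, ∑ u : Fin n, ∑ v : Fin n,
        (if (G i).Adj u v then 1 else 0) := by
      rw [hM]
      simp only [hm, Finset.card_filter]
      have h3 : ∀ u : Fin n,
          (∑ v : Fin n, ∑ i : Fin 3, if (G i).Adj u v then (1:ℕ) else 0)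
          = ∑ i : Fin 3, ∑ v : Fin n, if (G i).Adj u v then 1 else 0 :=
        fun u => Finset.sum_comm
      rw [Finset.sum_congr rfl fun u _ => h3 u, Finset.sum_comm]
    rw [h2, Fin.sum_univ_three, h1 0, h1 1, h1 2, hE]
    ring
  -- the triple sum
  set S := ∑ u : Fin n, ∑ v : Fin n, ∑ w : Fin n,
      (if u ≠ v ∧ u ≠ w ∧ v ≠ w then m u v + m v w + m u w else 0) with hS
  -- upper bound on S
  have hub : S ≤ n * ((n - 1) * ((n - 2) * 6)) := by
    have step1 : S ≤ ∑ u : Fin n, ∑ v : Fin n, ∑ w : Fin n,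
        (if u ≠ v ∧ u ≠ w ∧ v ≠ w then 6 else 0) := by
      rw [hS]
      refine Finset.sum_le_sum fun u _ => Finset.sum_le_sum fun v _ =>
        Finset.sum_le_sum fun w _ => ?_
      split_ifs with h
      · exact key u v w h.1 h.2.1 h.2.2
      · exact le_refl 0
    refine step1.trans ?_
    have inner2 : ∀ u v : Fin n,
        (∑ w : Fin n, if u ≠ v ∧ u ≠ w ∧ v ≠ w then (6:ℕ) else 0)
        = if u ≠ v then (n - 2) * 6 else 0 := by
      intro u v
      by_cases huv : u = v
      · simp [huv]
      · have h4 : ∀ w : Fin n, (if u ≠ v ∧ u ≠ w ∧ v ≠ w then (6:ℕ) else 0)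
            = if u ≠ w ∧ v ≠ w then 6 else 0 := by
          intro w; simp [huv]
        simp only [h4, if_pos huv]
        rw [← Finset.sum_filter, Finset.sum_const, smul_eq_mul, cardNe u v huv]
    simp only [inner2]
    have inner1 : ∀ u : Fin n,
        (∑ v : Fin n, if u ≠ v then (n - 2) * 6 else 0) = (n - 1) * ((n - 2) * 6) := by
      intro u
      rw [← Finset.sum_filter, Finset.sum_const, smul_eq_mul, cardNe1 u]
    simp only [inner1, Finset.sum_const, smul_eq_mul, Finset.card_univ, Fintype.card_fin]
    exact le_refl _
  -- lower computation of S
  have hlow : S = 3 * ((n - 2) * M) := by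
    have hpt : ∀ u v w : Fin n,
        (if u ≠ v ∧ u ≠ w ∧ v ≠ w then m u v + m v w + m u w else 0)
        = (if u ≠ v ∧ u ≠ w ∧ v ≠ w then m u v else 0)
          + (if u ≠ v ∧ u ≠ w ∧ v ≠ w then m v w else 0)
          + (if u ≠ v ∧ u ≠ w ∧ v ≠ w then m u w else 0) := by
      intro u v w; split_ifs <;> simp
    have hsplit : S = (∑ u : Fin n, ∑ v : Fin n, ∑ w : Fin n,
          (if u ≠ v ∧ u ≠ w ∧ v ≠ w then m u v else 0))
        + (∑ u : Fin n, ∑ v : Fin n, ∑ w : Fin n,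
          (if u ≠ v ∧ u ≠ w ∧ v ≠ w then m v w else 0))
        + (∑ u : Fin n, ∑ v : Fin n, ∑ w : Fin n,
          (if u ≠ v ∧ u ≠ w ∧ v ≠ w then m u w else 0)) := by
      rw [hS]
      simp only [hpt, Finset.sum_add_distrib]
    have hS1 : (∑ u : Fin n, ∑ v : Fin n, ∑ w : Fin n,
        (if u ≠ v ∧ u ≠ w ∧ v ≠ w then m u v else 0)) = (n - 2) * M :=
      sumIf m hm0
    have hS2 : (∑ u : Fin n, ∑ v : Fin n, ∑ w : Fin n,
        (if u ≠ v ∧ u ≠ w ∧ v ≠ w then m v w else 0)) = (n - 2) * M := by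
      have hre : (∑ u : Fin n, ∑ v : Fin n, ∑ w : Fin n,
          (if u ≠ v ∧ u ≠ w ∧ v ≠ w then m v w else 0))
          = ∑ v : Fin n, ∑ w : Fin n, ∑ u : Fin n,
          (if v ≠ w ∧ v ≠ u ∧ w ≠ u then m v w else 0) := by
        rw [Finset.sum_comm]
        refine Finset.sum_congr rfl fun v _ => ?_
        rw [Finset.sum_comm]
        refine Finset.sum_congr rfl fun w _ => Finset.sum_congr rfl fun u _ => ?_
        refine if_congr ?_ rfl rfl
        constructor
        · rintro ⟨h1, h2, h3⟩; exact ⟨h3, Ne.symm h1, Ne.symm h2⟩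
        · rintro ⟨h1, h2, h3⟩; exact ⟨Ne.symm h2, Ne.symm h3, h1⟩
      rw [hre]
      exact sumIf m hm0
    have hS3 : (∑ u : Fin n, ∑ v : Fin n, ∑ w : Fin n,
        (if u ≠ v ∧ u ≠ w ∧ v ≠ w then m u w else 0)) = (n - 2) * M := by
      have hre : (∑ u : Fin n, ∑ v : Fin n, ∑ w : Fin n,
          (if u ≠ v ∧ u ≠ w ∧ v ≠ w then m u w else 0))
          = ∑ u : Fin n, ∑ w : Fin n, ∑ v : Fin n,
          (if u ≠ w ∧ u ≠ v ∧ w ≠ v then m u w else 0) := by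
        refine Finset.sum_congr rfl fun u _ => ?_
        rw [Finset.sum_comm]
        refine Finset.sum_congr rfl fun w _ => Finset.sum_congr rfl fun v _ => ?_
        refine if_congr ?_ rfl rfl
        constructor
        · rintro ⟨h1, h2, h3⟩; exact ⟨h2, h1, Ne.symm h3⟩
        · rintro ⟨h1, h2, h3⟩; exact ⟨h2, h1, Ne.symm h3⟩
      rw [hre]
      exact sumIf m hm0
    rw [hsplit, hS1, hS2, hS3]
    ring
  -- combine
  have hcomb : 3 * ((n - 2) * (2 * E)) ≤ n * ((n - 1) * ((n - 2) * 6)) := by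
    rw [← hM2, ← hlow]; exact hub
  have hfinal : E ≤ n * (n - 1) := by
    have hpos : 0 < 6 * (n - 2) := by omega
    refine Nat.le_of_mul_le_mul_left ?_ hpos
    calc 6 * (n - 2) * E = 3 * ((n - 2) * (2 * E)) := by ring
      _ ≤ n * ((n - 1) * ((n - 2) * 6)) := hcomb
      _ = 6 * (n - 2) * (n * (n - 1)) := by ring
  have hch : 2 * n.choose 2 = n * (n - 1) := by
    rw [Nat.choose_two_right]
    have he : 2 ∣ n * (n - 1) := by
      rcases Nat.even_or_odd n with h | h
      · exact Dvd.dvd.mul_right h.two_dvd _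
      · exact Dvd.dvd.mul_left (Nat.Odd.sub_odd h odd_one).two_dvd _
    exact Nat.mul_div_cancel' he
  rw [hch]
  exact hfinal
end

section
/- Let G'' = (G''₁,G''₂,G''₃) be a 3-colouring template on a vertex set V with |V| = N, and suppose V is partitioned as V = V₁₂ ⊔ V₁₃ ⊔ D such that for j ∈ {2,3}: every edge of G''_j either has both endpoints in V₁ⱼ or joins a vertex of V₁ⱼ to a vertex of D, and the number of edges of G''_j between V₁ⱼ and D is at most |V₁ⱼ|·|D|/2. Suppose also |E(G''₂)| ≥ |E(G''₃)|. Then g(G'') := |E(G''₁)|+|E(G''₂)|+|E(G''₃)| − 2·C(N,2) − 2|E(G''₂)| + 2·√(C(N,2)·|E(G''₂)|) ≤ 3N. -/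
set_option maxHeartbeats 1000000

open Classical in
private lemma inside_bound' {N : ℕ} (G : SimpleGraph (Fin N)) (S : Set (Fin N)) :
    {e ∈ G.edgeSet | ∀ v ∈ e, v ∈ S}.ncard ≤ S.ncard.choose 2 := by
  haveI : Fintype ↥S := Fintype.ofFinite _
  have hsub : {e ∈ G.edgeSet | ∀ v ∈ e, v ∈ S} ⊆
      Sym2.map (Subtype.val : ↥S → Fin N) '' (⊤ : SimpleGraph ↥S).edgeSet := by
    rintro e ⟨he, hS⟩
    induction e using Sym2.ind with
    | _ u v =>
      have huv : G.Adj u v := he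
      have hu : u ∈ S := hS u (by simp)
      have hv : v ∈ S := hS v (by simp)
      refine ⟨s(⟨u, hu⟩, ⟨v, hv⟩), ?_, by simp⟩
      simp only [SimpleGraph.mem_edgeSet, SimpleGraph.top_adj, ne_eq, Subtype.mk.injEq]
      exact huv.ne
  calc {e ∈ G.edgeSet | ∀ v ∈ e, v ∈ S}.ncard
      ≤ (Sym2.map (Subtype.val : ↥S → Fin N) '' (⊤ : SimpleGraph ↥S).edgeSet).ncard :=
        Set.ncard_le_ncard hsub (Set.toFinite _)
    _ = (⊤ : SimpleGraph ↥S).edgeSet.ncard :=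
        Set.ncard_image_of_injective _ (Sym2.map.injective Subtype.val_injective)
    _ = (⊤ : SimpleGraph ↥S).edgeFinset.card := by
        rw [← Nat.card_coe_set_eq, Nat.card_eq_fintype_card,
          SimpleGraph.edgeFinset_card]
    _ = (Fintype.card ↥S).choose 2 :=
        SimpleGraph.card_edgeFinset_top_eq_card_choose_two
    _ = S.ncard.choose 2 := by rw [Set.ncard_eq_toFinset_card', Set.toFinset_card]

private lemma split_bound' {N : ℕ} (G : SimpleGraph (Fin N)) (S D : Set (Fin N))
    (hstruct : ∀ u v : Fin N, G.Adj u v →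
      (u ∈ S ∧ v ∈ S) ∨ (u ∈ S ∧ v ∈ D) ∨ (u ∈ D ∧ v ∈ S)) :
    G.edgeSet.ncard ≤ {e ∈ G.edgeSet | ∀ v ∈ e, v ∈ S}.ncard +
      {e ∈ G.edgeSet | ∃ u ∈ S, ∃ v ∈ D, e = s(u, v)}.ncard := by
  have hsub : G.edgeSet ⊆ {e ∈ G.edgeSet | ∀ v ∈ e, v ∈ S} ∪
      {e ∈ G.edgeSet | ∃ u ∈ S, ∃ v ∈ D, e = s(u, v)} := by
    intro e he
    induction e using Sym2.ind with
    | _ u v =>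
      have huv : G.Adj u v := he
      rcases hstruct u v huv with ⟨hu, hv⟩ | ⟨hu, hv⟩ | ⟨hu, hv⟩
      · left
        refine ⟨he, ?_⟩
        intro w hw
        rcases Sym2.mem_iff.mp hw with rfl | rfl <;> assumption
      · right; exact ⟨he, u, hu, v, hv, rfl⟩
      · right
        refine ⟨he, v, hv, u, hu, ?_⟩
        rw [Sym2.eq_swap]
  exact le_trans (Set.ncard_le_ncard hsub (Set.toFinite _)) (Set.ncard_union_le _ _)

private lemma sqrt_sum_le' (x y d b c : ℝ) (hx : 0 ≤ x) (hy : 0 ≤ y) (hd : 0 ≤ d)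
    (hb : 0 ≤ b) (hc : 0 ≤ c)
    (hxx : x ≤ x^2) (hyy : y ≤ y^2) (hdd : d ≤ d^2)
    (hb2 : 2*b ≤ x*(x-1) + x*d) (hc2 : 2*c ≤ y*(y-1) + y*d) :
    Real.sqrt b + Real.sqrt c ≤ Real.sqrt ((x+y+d)*((x+y+d)-1)/2) := by
  set B : ℝ := (x*(x-1) + x*d)/2 with hBdef
  set Γ : ℝ := (y*(y-1) + y*d)/2 with hΓdef
  set C : ℝ := (x+y+d)*((x+y+d)-1)/2 with hCdef
  have hB : b ≤ B := by rw [hBdef]; linarith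
  have hΓ : c ≤ Γ := by rw [hΓdef]; linarith
  have hB0 : 0 ≤ B := le_trans hb hB
  have hΓ0 : 0 ≤ Γ := le_trans hc hΓ
  have h1 : Real.sqrt b ≤ Real.sqrt B := Real.sqrt_le_sqrt hB
  have h2 : Real.sqrt c ≤ Real.sqrt Γ := Real.sqrt_le_sqrt hΓ
  have main : Real.sqrt B + Real.sqrt Γ ≤ Real.sqrt C := by
    set s : ℝ := Real.sqrt (B*Γ) with hsdef
    have hs0 : 0 ≤ s := Real.sqrt_nonneg _
    have hs : s^2 = B*Γ := Real.sq_sqrt (mul_nonneg hB0 hΓ0)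
    have hT : 0 ≤ C - B - Γ := by
      rw [hBdef, hΓdef, hCdef]
      nlinarith [mul_nonneg hx hy, mul_nonneg hx hd, mul_nonneg hy hd, hdd]
    have hA2 : 4 * s^2 ≤ (C - B - Γ)^2 := by
      rw [hs, hBdef, hΓdef, hCdef]
      linarith [sq_nonneg (d*(d-1)),
        mul_nonneg (sq_nonneg d) (by linarith : (0:ℝ) ≤ y^2 - y),
        mul_nonneg (mul_nonneg hy hd) (by linarith : (0:ℝ) ≤ d^2 - d),
        mul_nonneg hy (sq_nonneg d),
        mul_nonneg (sq_nonneg d) (by linarith : (0:ℝ) ≤ x^2 - x),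
        mul_nonneg (mul_nonneg hx hd) (by linarith : (0:ℝ) ≤ d^2 - d),
        mul_nonneg hx (sq_nonneg d),
        mul_nonneg hy (by linarith : (0:ℝ) ≤ x^2 - x),
        mul_nonneg hx (sq_nonneg y),
        mul_nonneg (mul_nonneg hx hy) (sq_nonneg d),
        mul_nonneg (mul_nonneg hx hy) hd]
    have h2s : 2 * s ≤ C - B - Γ := by nlinarith [hs0, hT, hA2]
    have hsq : (Real.sqrt B + Real.sqrt Γ)^2 ≤ C := by
      have hm : Real.sqrt B * Real.sqrt Γ = s := (Real.sqrt_mul hB0 Γ).symm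
      have e1 : Real.sqrt B ^ 2 = B := Real.sq_sqrt hB0
      have e2 : Real.sqrt Γ ^ 2 = Γ := Real.sq_sqrt hΓ0
      nlinarith [hm, e1, e2, h2s]
    calc Real.sqrt B + Real.sqrt Γ
        = Real.sqrt ((Real.sqrt B + Real.sqrt Γ)^2) :=
          (Real.sqrt_sq (by positivity)).symm
      _ ≤ Real.sqrt C := Real.sqrt_le_sqrt hsq
  linarith

theorem structured_template_g_bound
    (N : ℕ) (G : Fin 3 → SimpleGraph (Fin N)) (V12 V13 D : Set (Fin N))
    (hd1 : Disjoint V12 V13) (hd2 : Disjoint V12 D) (hd3 : Disjoint V13 D)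
    (hcover : V12 ∪ V13 ∪ D = Set.univ)
    (hstruct2 : ∀ u v : Fin N, (G 1).Adj u v →
      (u ∈ V12 ∧ v ∈ V12) ∨ (u ∈ V12 ∧ v ∈ D) ∨ (u ∈ D ∧ v ∈ V12))
    (hstruct3 : ∀ u v : Fin N, (G 2).Adj u v →
      (u ∈ V13 ∧ v ∈ V13) ∨ (u ∈ V13 ∧ v ∈ D) ∨ (u ∈ D ∧ v ∈ V13))
    (hcount2 : 2 * (({e ∈ (G 1).edgeSet | ∃ u ∈ V12, ∃ v ∈ D, e = s(u, v)}.ncard : ℝ)) ≤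
      (V12.ncard : ℝ) * (D.ncard : ℝ))
    (hcount3 : 2 * (({e ∈ (G 2).edgeSet | ∃ u ∈ V13, ∃ v ∈ D, e = s(u, v)}.ncard : ℝ)) ≤
      (V13.ncard : ℝ) * (D.ncard : ℝ))
    (hE : edgeCount (G 1) ≥ edgeCount (G 2)) :
    (edgeCount (G 0) : ℝ) + (edgeCount (G 1) : ℝ) + (edgeCount (G 2) : ℝ)
        - 2 * (N.choose 2 : ℝ) - 2 * (edgeCount (G 1) : ℝ)
        + 2 * Real.sqrt ((N.choose 2 : ℝ) * (edgeCount (G 1) : ℝ)) ≤ 3 * N := by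
  -- notation
  set a := edgeCount (G 0) with hadef
  set b := edgeCount (G 1) with hbdef
  set c := edgeCount (G 2) with hcdef
  set x := V12.ncard with hxdef
  set y := V13.ncard with hydef
  set d := D.ncard with hddef
  -- the partition gives x + y + d = N
  have hN : x + y + d = N := by
    have h12 : Disjoint (V12 ∪ V13) D := Set.disjoint_union_left.mpr ⟨hd2, hd3⟩
    have e1 : (V12 ∪ V13 ∪ D).ncard = (V12 ∪ V13).ncard + D.ncard :=
      Set.ncard_union_eq h12 (Set.toFinite _) (Set.toFinite _)
    have e2 : (V12 ∪ V13).ncard = x + y :=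
      Set.ncard_union_eq hd1 (Set.toFinite _) (Set.toFinite _)
    have e3 : (V12 ∪ V13 ∪ D).ncard = N := by
      rw [hcover, Set.ncard_univ, Nat.card_eq_fintype_card, Fintype.card_fin]
    rw [e1, e2] at e3
    exact e3
  -- a ≤ C(N,2)
  have ha : a ≤ N.choose 2 := by
    have h := inside_bound' (G 0) (Set.univ : Set (Fin N))
    have hu : {e ∈ (G 0).edgeSet | ∀ v ∈ e, v ∈ (Set.univ : Set (Fin N))}
        = (G 0).edgeSet := by ext e; simp
    rw [hu] at h
    rwa [Set.ncard_univ, Nat.card_eq_fintype_card, Fintype.card_fin] at h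
  -- edge count bounds for G 1 and G 2
  have hb1 : b ≤ x.choose 2 +
      {e ∈ (G 1).edgeSet | ∃ u ∈ V12, ∃ v ∈ D, e = s(u, v)}.ncard :=
    le_trans (split_bound' (G 1) V12 D hstruct2)
      (by gcongr; exact inside_bound' (G 1) V12)
  have hc1 : c ≤ y.choose 2 +
      {e ∈ (G 2).edgeSet | ∃ u ∈ V13, ∃ v ∈ D, e = s(u, v)}.ncard :=
    le_trans (split_bound' (G 2) V13 D hstruct3)
      (by gcongr; exact inside_bound' (G 2) V13)
  -- real versions
  have hb2 : 2*(b:ℝ) ≤ (x:ℝ)*((x:ℝ)-1) + (x:ℝ)*(d:ℝ) := by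
    have h1 : (b:ℝ) ≤ (x.choose 2 : ℝ) +
        ({e ∈ (G 1).edgeSet | ∃ u ∈ V12, ∃ v ∈ D, e = s(u, v)}.ncard : ℝ) := by
      exact_mod_cast hb1
    rw [Nat.cast_choose_two] at h1
    linarith
  have hc2 : 2*(c:ℝ) ≤ (y:ℝ)*((y:ℝ)-1) + (y:ℝ)*(d:ℝ) := by
    have h1 : (c:ℝ) ≤ (y.choose 2 : ℝ) +
        ({e ∈ (G 2).edgeSet | ∃ u ∈ V13, ∃ v ∈ D, e = s(u, v)}.ncard : ℝ) := by
      exact_mod_cast hc1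
    rw [Nat.cast_choose_two] at h1
    linarith
  -- key inequality √b + √c ≤ √C
  have hxx : (x:ℝ) ≤ (x:ℝ)^2 := by
    have : x ≤ x^2 := Nat.le_self_pow two_ne_zero x
    exact_mod_cast this
  have hyy : (y:ℝ) ≤ (y:ℝ)^2 := by
    have : y ≤ y^2 := Nat.le_self_pow two_ne_zero y
    exact_mod_cast this
  have hdd : (d:ℝ) ≤ (d:ℝ)^2 := by
    have : d ≤ d^2 := Nat.le_self_pow two_ne_zero d
    exact_mod_cast this
  have key : Real.sqrt b + Real.sqrt c ≤ Real.sqrt (N.choose 2 : ℝ) := by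
    have h := sqrt_sum_le' x y d b c (by positivity) (by positivity) (by positivity)
      (by positivity) (by positivity) hxx hyy hdd hb2 hc2
    have hC : ((x:ℝ)+y+d)*(((x:ℝ)+y+d)-1)/2 = (N.choose 2 : ℝ) := by
      rw [Nat.cast_choose_two]
      have : ((x:ℝ) + y + d) = (N:ℝ) := by exact_mod_cast congrArg (Nat.cast : ℕ → ℝ) hN
      rw [this]
    rwa [hC] at h
  -- finish
  set R : ℝ := (N.choose 2 : ℝ) with hRdef
  have hR0 : (0:ℝ) ≤ R := by positivity
  have hb0 : (0:ℝ) ≤ (b:ℝ) := by positivity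
  have e1 : Real.sqrt b ^ 2 = (b:ℝ) := Real.sq_sqrt hb0
  have e2 : Real.sqrt c ^ 2 = (c:ℝ) := Real.sq_sqrt (by positivity)
  have e3 : Real.sqrt R ^ 2 = R := Real.sq_sqrt hR0
  have e4 : Real.sqrt (R * b) = Real.sqrt R * Real.sqrt b := Real.sqrt_mul hR0 _
  have haR : (a:ℝ) ≤ R := by rw [hRdef]; exact_mod_cast ha
  have hsc : Real.sqrt c ≤ Real.sqrt R - Real.sqrt b := by linarith [key]
  have hcR : (c:ℝ) ≤ (Real.sqrt R - Real.sqrt b)^2 := by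
    rw [← e2]
    have h0 : (0:ℝ) ≤ Real.sqrt c := Real.sqrt_nonneg _
    nlinarith [hsc, h0]
  have hN0 : (0:ℝ) ≤ 3*(N:ℝ) := by positivity
  rw [e4]
  nlinarith [hcR, haR, e1, e3, hN0]
end
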